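/- Let p = 1 and d = 1/2, and let n ≥ 2 be an integer. Then μ₁ = −1 − d/p + (n−1)·d/(2p) = (n − 7)/4, and: (i) if n ≤ 6, every nonzero complex eigenvalue of the 3n×3n block matrix A is a negative real number; (ii) if n ≥ 8, A has a positive real eigenvalue; (iii) if n = 7, the eigenvalue 0 of A has algebraic multiplicity n + 1 and all remaining eigenvalues are negative reals. -/

import Mathlib

/-- The diagonal block `A₀` of the linear part of the ring FMHNN system. -/
noncomputable def ringA0 (d : ℝ) (p : ℕ) : Matrix (Fin 3) (Fin 3) ℝ :=
  !![-1 - d / (p : ℝ), 0, 0;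
     0, -1, 0;
     1, -1, 0]

/-- The off-diagonal block `A₁` of the linear part of the ring FMHNN system. -/
noncomputable def ringA1 (d : ℝ) (p : ℕ) : Matrix (Fin 3) (Fin 3) ℝ :=
  !![d / (2 * (p : ℝ)), 0, 0;
     0, 0, 0;
     0, 0, 0]

/-- The `3n × 3n` block circulant matrix `bcirc(A₀, A₁, …, A₁)`, the linear part of the
ring FMHNN system with `n` sub-networks. -/
noncomputable def ringA (d : ℝ) (p n : ℕ) : Matrix (Fin n × Fin 3) (Fin n × Fin 3) ℝ :=
  fun q r => if q.1 = r.1 then ringA0 d p q.2 r.2 else ringA1 d p q.2 r.2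

open Matrix Polynomial

lemma det_const_diag (n : ℕ) (hn : 1 ≤ n) (a b : ℝ) (h : a - b ≠ 0) :
    (Matrix.of fun i j : Fin n => if i = j then a else b).det
      = (a + (n - 1 : ℝ) * b) * (a - b) ^ (n - 1) := by
  have key : (Matrix.of fun i j : Fin n => if i = j then a else b)
      = (a - b) • (1 + Matrix.replicateCol (Fin 1) (fun _ : Fin n => (1:ℝ)) *
          Matrix.replicateRow (Fin 1) (fun _ : Fin n => b / (a - b))) := by
    ext i j
    by_cases hij : i = j <;>
      simp [hij, Matrix.mul_apply, Matrix.one_apply, Matrix.smul_apply, smul_eq_mul] <;>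
      field_simp <;> ring
  erw [key, Matrix.det_smul, Matrix.det_one_add_replicateCol_mul_replicateRow (ι := Fin 1)]
  simp only [dotProduct, Finset.sum_const, Finset.card_univ, Fintype.card_fin, smul_eq_mul,
    mul_one]
  have h2 : (a - b) ^ n = (a - b) ^ (n - 1) * (a - b) := by
    rw [← pow_succ, Nat.sub_add_cancel hn]
  rw [nsmul_eq_mul, h2]
  field_simp
  ring

lemma ringA_eval (n : ℕ) (hn : 2 ≤ n) (t : ℝ) (ht : 0 < t) :
    Polynomial.eval t (ringA (1/2) 1 n).charpoly
      = (t - ((n:ℝ) - 7)/4) * (t + 7/4) ^ (n-1) * (t + 1) ^ n * t ^ n := by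
  have hn1 : 1 ≤ n := le_trans (by norm_num) hn
  set A := ringA (1/2) 1 n with hA
  -- the real matrix t•1 - A, transposed
  set D : Matrix (Fin n × Fin 3) (Fin n × Fin 3) ℝ :=
    Matrix.of fun p q => (if q = p then t else 0) - A q p with hD
  have h1 : Polynomial.eval t A.charpoly = D.det := by
    rw [Matrix.charpoly]
    have := (Polynomial.evalRingHom t).map_det (Matrix.charmatrix A)
    simp only [coe_evalRingHom] at this
    rw [this, ← Matrix.det_transpose]
    congr 1
    ext p q
    by_cases hpq : p = q
    · subst hpq
      simp [Matrix.charmatrix_apply_eq, hD]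
    · have : q ≠ p := fun h => hpq h.symm
      simp [hD, this]
  rw [h1]
  -- block triangular structure
  have hbt : D.BlockTriangular Prod.snd := by
    rintro ⟨q, a⟩ ⟨r, b⟩ hab
    simp only [Prod.snd] at hab
    have hne : (⟨r, b⟩ : Fin n × Fin 3) ≠ ⟨q, a⟩ := by
      intro h
      rw [Prod.mk.injEq] at h
      exact absurd h.2 (by intro h2; rw [h2] at hab; exact lt_irrefl _ hab)
    simp only [hD, Matrix.of_apply, if_neg hne, zero_sub, neg_eq_zero, hA, ringA]
    fin_cases a <;> fin_cases b <;>
      simp_all [ringA0, ringA1] <;>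
      split <;> norm_num
  rw [hbt.det]
  have himg : (Finset.univ.image (Prod.snd : Fin n × Fin 3 → Fin 3)) = Finset.univ := by
    apply Finset.eq_univ_iff_forall.2
    intro k
    exact Finset.mem_image.2 ⟨(⟨0, by omega⟩, k), Finset.mem_univ _, rfl⟩
  rw [himg, Fin.prod_univ_three]
  -- compute each block
  have hblock : ∀ (k : Fin 3) (a b : ℝ), (∀ i : Fin n, D (i, k) (i, k) = a) →
      (∀ i j : Fin n, i ≠ j → D (i, k) (j, k) = b) →
      (D.toSquareBlock Prod.snd k).det
        = (Matrix.of fun i j : Fin n => if i = j then a else b).det := by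
    intro k a b hda hdb
    let e : Fin n ≃ {p : Fin n × Fin 3 // p.2 = k} :=
      { toFun := fun i => ⟨(i, k), rfl⟩
        invFun := fun p => p.1.1
        left_inv := fun i => rfl
        right_inv := fun p => by
          rcases p with ⟨⟨i, l⟩, hl⟩
          simp only at hl
          subst hl
          rfl }
    rw [← Matrix.det_submatrix_equiv_self e]
    congr 1
    ext i j
    by_cases hij : i = j
    · subst hij
      simpa [Matrix.toSquareBlock, Matrix.toSquareBlockProp, e] using hda i
    · simpa [Matrix.toSquareBlock, Matrix.toSquareBlockProp, e, hij] using hdb i j hij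
  have e0 : (D.toSquareBlock Prod.snd 0).det
      = (t - ((n:ℝ) - 7)/4) * (t + 7/4) ^ (n-1) := by
    rw [hblock 0 (t + 3/2) (-(1/4))
      (fun i => by norm_num [hD, hA, ringA, ringA0, Matrix.vecHead, Matrix.vecTail, Function.comp])
      (fun i j hij => by norm_num [hD, hA, ringA, ringA1, Matrix.vecHead, Matrix.vecTail, Function.comp, Prod.ext_iff, hij.symm]),
      det_const_diag n hn1 _ _ (by norm_num; linarith)]
    ring_nf
  have e1 : (D.toSquareBlock Prod.snd 1).det = (t + 1) ^ n := by
    rw [hblock 1 (t + 1) 0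
      (fun i => by norm_num [hD, hA, ringA, ringA0, Matrix.vecHead, Matrix.vecTail, Function.comp])
      (fun i j hij => by norm_num [hD, hA, ringA, ringA1, Matrix.vecHead, Matrix.vecTail, Function.comp, Prod.ext_iff, hij.symm]),
      det_const_diag n hn1 _ _ (by norm_num; linarith)]
    have hpow : (t + 1) ^ n = (t + 1) ^ (n-1) * (t + 1) := by
      rw [← pow_succ, Nat.sub_add_cancel hn1]
    rw [hpow]; ring
  have e2 : (D.toSquareBlock Prod.snd 2).det = t ^ n := by
    rw [hblock 2 t 0
      (fun i => by norm_num [hD, hA, ringA, ringA0, Matrix.vecHead, Matrix.vecTail, Function.comp]; rfl)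
      (fun i j hij => by norm_num [hD, hA, ringA, ringA1, Matrix.vecHead, Matrix.vecTail, Function.comp, Prod.ext_iff, hij.symm]; rfl),
      det_const_diag n hn1 _ _ (by norm_num; linarith)]
    have hpow : t ^ n = t ^ (n-1) * t := by
      rw [← pow_succ, Nat.sub_add_cancel hn1]
    rw [hpow]; ring
  rw [e0, e1, e2]

lemma ringA_charpoly (n : ℕ) (hn : 2 ≤ n) :
    (ringA (1/2) 1 n).charpoly
      = (X - C (((n:ℝ) - 7)/4)) * (X + C (7/4)) ^ (n-1) * (X + 1) ^ n * X ^ n := by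
  apply Polynomial.eq_of_infinite_eval_eq
  apply Set.Infinite.mono ?_ (Set.Ioi_infinite (0:ℝ))
  intro t ht
  simp only [Set.mem_setOf_eq]
  rw [ringA_eval n hn t ht]
  simp [eval_mul, eval_pow, eval_sub, eval_add, eval_X, eval_C, eval_one]

lemma ringA_root_cases (n : ℕ) (hn : 2 ≤ n) (z : ℂ) (hz : z ≠ 0)
    (h : Polynomial.aeval z (ringA (1/2) 1 n).charpoly = 0) :
    z = ((((n:ℝ) - 7)/4 : ℝ) : ℂ) ∨ z = -(7/4 : ℝ) ∨ z = -1 := by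
  rw [ringA_charpoly n hn] at h
  simp only [_root_.map_mul, _root_.map_pow, _root_.map_sub, _root_.map_add, Polynomial.aeval_X, Polynomial.aeval_C,
    Polynomial.aeval_one, _root_.map_one] at h
  rcases mul_eq_zero.1 h with h | h
  · rcases mul_eq_zero.1 h with h | h
    · rcases mul_eq_zero.1 h with h | h
      · left
        have := sub_eq_zero.1 h
        simp only [this]
        push_cast
        ring
      · right; left
        have := pow_eq_zero_iff (n := n - 1) (by omega) |>.1 h
        have := add_eq_zero_iff_eq_neg.1 this
        rw [this]
        push_cast
        ring
    · right; right
      have := pow_eq_zero_iff (n := n) (by omega) |>.1 h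
      exact add_eq_zero_iff_eq_neg.1 this
  · exact absurd (pow_eq_zero_iff (n := n) (by omega) |>.1 h) hz

/-- For `p = 1`, `d = 1/2` and `n ≥ 2`: `μ₁ = −1 − d/p + (n−1)·d/(2p) = (n−7)/4`, and
(i) if `n ≤ 6` every nonzero complex eigenvalue of `A` is a negative real number;
(ii) if `n ≥ 8` then `A` has a positive real eigenvalue;
(iii) if `n = 7` the eigenvalue `0` has algebraic multiplicity `n + 1` and all the
remaining eigenvalues are negative reals. -/
theorem ringA_example (n : ℕ) (hn : 2 ≤ n) :
    (-1 - (1/2 : ℝ) / ((1 : ℕ) : ℝ) + ((n : ℝ) - 1) * (1/2) / (2 * ((1 : ℕ) : ℝ))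
        = ((n : ℝ) - 7) / 4) ∧
      (n ≤ 6 → ∀ z : ℂ, z ≠ 0 → Polynomial.aeval z (ringA (1/2) 1 n).charpoly = 0 →
        z.im = 0 ∧ z.re < 0) ∧
      (8 ≤ n → ∃ r : ℝ, 0 < r ∧ (ringA (1/2) 1 n).charpoly.IsRoot r) ∧
      (n = 7 →
        Polynomial.rootMultiplicity 0 (ringA (1/2) 1 n).charpoly = n + 1 ∧
        ∀ z : ℂ, z ≠ 0 → Polynomial.aeval z (ringA (1/2) 1 n).charpoly = 0 →
          z.im = 0 ∧ z.re < 0) := by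

  have neg_roots : ∀ z : ℂ, (z = -(7/4 : ℝ) ∨ z = -1) → z.im = 0 ∧ z.re < 0 := by
    rintro z (rfl | rfl) <;> norm_num
  refine ⟨by push_cast; ring, ?_, ?_, ?_⟩
  · intro h6 z hz hroot
    rcases ringA_root_cases n hn z hz hroot with h | h
    · subst h
      constructor
      · simp
      · simp only [Complex.ofReal_re]
        have : (n : ℝ) ≤ 6 := by exact_mod_cast h6
        apply div_neg_of_neg_of_pos <;> [linarith; norm_num]
    · exact neg_roots z h
  · intro h8
    refine ⟨((n:ℝ) - 7)/4, ?_, ?_⟩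
    · have : (8:ℝ) ≤ (n:ℝ) := by exact_mod_cast h8
      apply div_pos <;> [linarith; norm_num]
    · rw [Polynomial.IsRoot, ringA_charpoly n hn]
      simp
  · rintro rfl
    constructor
    · have hcp : (ringA (1/2) 1 7).charpoly
          = ((X + C (7/4:ℝ)) ^ 6 * (X + 1) ^ 7) * (X - C (0:ℝ)) ^ 8 := by
        rw [ringA_charpoly 7 (by norm_num)]
        norm_num
        ring
      rw [hcp, Polynomial.rootMultiplicity_mul, Polynomial.rootMultiplicity_X_sub_C_pow,
        Polynomial.rootMultiplicity_eq_zero]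
      · intro h
        simp [Polynomial.IsRoot] at h
      · apply mul_ne_zero (mul_ne_zero ?_ ?_) ?_
        · exact pow_ne_zero _ (fun h => by
            have := congrArg (Polynomial.eval 0) h
            norm_num at this)
        · exact pow_ne_zero _ (fun h => by
            have := congrArg (Polynomial.eval 0) h
            norm_num at this)
        · exact pow_ne_zero _ (Polynomial.X_sub_C_ne_zero 0)
    · intro z hz hroot
      rcases ringA_root_cases 7 (by norm_num) z hz hroot with h | h
      · norm_num at h
        exact absurd h hz
      · exact neg_roots z h
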